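/- arXiv:1505.02246 — 4 statements merged into one kernel-verified Lean document; each statement's English description precedes it below -/
import Mathlib

section
/- For a nontrivial connected graph G of size m, pc(G) = m if and only if G is the star K_{1,m}. -/
open SimpleGraph

/-- An edge-coloring with `k` colors is a proper-path coloring if every pair of distinct
vertices is joined by a path in which no two consecutive (adjacent) edges share a color. -/
def IsProperPathColoring {V : Type*} (G : SimpleGraph V) {k : ℕ} (c : Sym2 V → Fin k) : Prop :=
  ∀ u v : V, u ≠ v → ∃ p : G.Walk u v, p.IsPath ∧
    List.Chain' (fun e f => c e ≠ c f) p.edges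

/-- The proper connection number: the minimum number of colors in a proper-path coloring. -/
noncomputable def pc {V : Type*} (G : SimpleGraph V) : ℕ :=
  sInf {k | ∃ c : Sym2 V → Fin k, IsProperPathColoring G c}

section Aux

variable {V : Type*}

/-- Consecutive edges of a walk share a vertex. -/
lemma walk_edges_chain' {G : SimpleGraph V} : ∀ {u v : V} (p : G.Walk u v),
    List.Chain' (fun e f : Sym2 V => ∃ x, x ∈ e ∧ x ∈ f) p.edges
  | _, _, .nil => by simp [List.Chain']
  | _, _, .cons _ .nil => by simp [List.Chain']
  | u, v, .cons (v := b) h (.cons h' q) => by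
      rw [SimpleGraph.Walk.edges_cons]
      refine List.IsChain.cons (walk_edges_chain' (.cons h' q)) ?_
      intro f hf
      simp only [SimpleGraph.Walk.edges_cons, List.head?_cons, Option.mem_some_iff] at hf
      subst hf
      exact ⟨b, by simp, by simp⟩

/-- A coloring that separates distinct intersecting edges is a proper-path coloring. -/
lemma isPPC_of {G : SimpleGraph V} (hc : G.Connected) {k : ℕ} (c : Sym2 V → Fin k)
    (h : ∀ e f : Sym2 V, e ∈ G.edgeSet → f ∈ G.edgeSet → e ≠ f →
      (∃ x, x ∈ e ∧ x ∈ f) → c e ≠ c f) :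
    IsProperPathColoring G c := by
  classical
  intro u v huv
  let P := ((hc.preconnected u v).some).toPath
  obtain ⟨p, hp⟩ : ∃ p : G.Walk u v, p.IsPath := ⟨P.1, P.2⟩
  refine ⟨p, hp, ?_⟩
  have hshare := walk_edges_chain' p
  have hnd : p.edges.Nodup := hp.edges_nodup
  unfold List.Chain' at hshare ⊢
  rw [List.isChain_iff_getElem] at hshare ⊢
  intro i hi
  refine h _ _ (p.edges_subset_edgeSet (List.getElem_mem _))
    (p.edges_subset_edgeSet (List.getElem_mem _)) ?_ (hshare i hi)
  intro heq
  rw [hnd.getElem_inj_iff] at heq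
  simp at heq

/-- Lower bound for stars: every proper-path coloring of a star with center `a`
uses at least as many colors as there are leaves. -/
lemma star_lb {G : SimpleGraph V} [Fintype V] [DecidableEq V] (a : V)
    (h2 : ∀ u v : V, G.Adj u v → u = a ∨ v = a)
    {k : ℕ} (c : Sym2 V → Fin k) (hpc : IsProperPathColoring G c) :
    Fintype.card {v : V // v ≠ a} ≤ k := by
  classical
  have hinj : Function.Injective (fun v : {v : V // v ≠ a} => c s(a, v.1)) := by
    rintro ⟨x, hx⟩ ⟨y, hy⟩ hxy
    simp only at hxy
    ext
    by_contra hxy'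
    obtain ⟨p, hp, hch⟩ := hpc x y hxy'
    cases p with
    | nil => exact hxy' rfl
    | cons h q =>
      rename_i b
      obtain rfl : a = b := ((h2 _ _ h).resolve_left hx).symm
      cases q with
      | nil => exact hy rfl
      | cons h' r =>
        rename_i z
        cases r with
        | nil =>
          simp only [SimpleGraph.Walk.edges_cons, SimpleGraph.Walk.edges_nil,
            List.Chain', List.isChain_cons_cons, List.isChain_singleton, and_true] at hch
          apply hch
          rw [Sym2.eq_swap, hxy]
        | cons h'' r' =>
          rename_i w
          have hnd := hp.support_nodup
          simp only [SimpleGraph.Walk.support_cons, List.nodup_cons] at hnd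
          have haz : a ≠ z := by
            intro hh
            exact hnd.2.1 (by rw [hh]; exact List.mem_cons_self)
          obtain rfl : a = w := ((h2 _ _ h'').resolve_left (fun hh => haz hh.symm)).symm
          exact hnd.2.1 (List.mem_cons_of_mem _ (SimpleGraph.Walk.start_mem_support r'))
  simpa using Fintype.card_le_of_injective _ hinj

/-- In a star with center `a`, the leaves are in bijection with the edges. -/
lemma star_card {G : SimpleGraph V} [Fintype V] [DecidableEq V] [DecidableRel G.Adj] (a : V)
    (h1 : ∀ v, v ≠ a → G.Adj a v) (h2 : ∀ u v : V, G.Adj u v → u = a ∨ v = a) :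
    Fintype.card {v : V // v ≠ a} = G.edgeFinset.card := by
  rw [SimpleGraph.edgeFinset, Set.toFinset_card]
  refine Fintype.card_of_bijective (f := fun v : {v : V // v ≠ a} =>
    (⟨s(a, v.1), (h1 v.1 v.2)⟩ : G.edgeSet)) ⟨?_, ?_⟩
  · rintro ⟨x, hx⟩ ⟨y, hy⟩ h
    simp only [Subtype.ext_iff, Subtype.mk.injEq, Sym2.congr_right] at h
    exact Subtype.ext h
  · rintro ⟨e, he⟩
    induction e with
    | _ x y =>
      rw [SimpleGraph.mem_edgeSet] at he
      rcases h2 x y he with rfl | rfl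
      · exact ⟨⟨y, he.ne'⟩, rfl⟩
      · exact ⟨⟨x, he.ne⟩, by simp [Sym2.eq_swap]⟩

/-- A star with center `a` and `m` leaves is isomorphic to `K_{1,m}`. -/
lemma star_iso {G : SimpleGraph V} [Fintype V] [DecidableEq V] {m : ℕ} (a : V)
    (h1 : ∀ v, v ≠ a → G.Adj a v) (h2 : ∀ u v : V, G.Adj u v → u = a ∨ v = a)
    (hcard : Fintype.card {v : V // v ≠ a} = m) :
    Nonempty (G ≃g completeBipartiteGraph (Fin 1) (Fin m)) := by
  have e1 : {v : V // v = a} ≃ Fin 1 := Fintype.equivFinOfCardEq (Fintype.card_subtype_eq a)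
  have e2 : {v : V // ¬ v = a} ≃ Fin m := Fintype.equivFinOfCardEq (by simpa using hcard)
  let E : V ≃ Fin 1 ⊕ Fin m := (Equiv.sumCompl (fun v => v = a)).symm.trans (Equiv.sumCongr e1 e2)
  have hE : ∀ v : V, (E v).isLeft = true ↔ v = a := by
    intro v
    by_cases h : v = a <;> simp [E, Equiv.sumCompl, h]
  have hadj : ∀ u v : V, G.Adj u v ↔ ((u = a ∧ ¬ v = a) ∨ (¬ u = a ∧ v = a)) := by
    intro u v
    constructor
    · intro h
      rcases h2 u v h with rfl | rfl
      · exact Or.inl ⟨rfl, h.ne'⟩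
      · exact Or.inr ⟨h.ne, rfl⟩
    · rintro (⟨rfl, hv⟩ | ⟨hu, rfl⟩)
      · exact h1 v hv
      · exact (h1 u hu).symm
  refine ⟨⟨E, ?_⟩⟩
  intro u v
  show ((E u).isLeft ∧ (E v).isRight ∨ (E u).isRight ∧ (E v).isLeft) ↔ G.Adj u v
  rw [hadj u v]
  simp only [← Sum.not_isLeft, ← hE]

end Aux

theorem stmt2 {V : Type*} [Fintype V] [Nontrivial V] (G : SimpleGraph V)
    [DecidableRel G.Adj] (hc : G.Connected) (m : ℕ) (hm : G.edgeFinset.card = m) :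
    pc G = m ↔ Nonempty (G ≃g completeBipartiteGraph (Fin 1) (Fin m)) := by
  classical
  set S : Set ℕ := {k | ∃ c : Sym2 V → Fin k, IsProperPathColoring G c} with hS
  have hpc : pc G = sInf S := rfl
  -- the graph has at least one edge
  have hm1 : 1 ≤ m := by
    obtain ⟨u, v, huv⟩ := exists_pair_ne V
    obtain ⟨w⟩ := hc.preconnected u v
    rw [← hm]
    rw [Nat.one_le_iff_ne_zero, Ne, Finset.card_eq_zero]
    intro hempty
    cases w with
    | nil => exact huv rfl
    | cons h q =>
      have : s(u, _) ∈ G.edgeFinset := SimpleGraph.mem_edgeFinset.2 h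
      rw [hempty] at this
      exact absurd this (Finset.notMem_empty _)
  -- the injective coloring: m ∈ S
  have hcardinst : Fintype.card G.edgeSet = m := by
    rw [← Set.toFinset_card]; exact hm
  have hmemS : m ∈ S := by
    have eqv : G.edgeSet ≃ Fin m := Fintype.equivFinOfCardEq hcardinst
    refine ⟨fun e => if h : e ∈ G.edgeSet then eqv ⟨e, h⟩ else ⟨0, hm1⟩, ?_⟩
    refine isPPC_of hc _ ?_
    intro e f he hf hef _
    simp only [dif_pos he, dif_pos hf]
    intro h
    exact hef (Subtype.ext_iff.1 (eqv.injective h))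
  have hSne : S.Nonempty := ⟨m, hmemS⟩
  constructor
  · -- pc G = m → star
    intro hpceq
    by_contra hniso
    -- case A : two disjoint edges
    by_cases hA : ∃ e ∈ G.edgeSet, ∃ f ∈ G.edgeSet, e ≠ f ∧ ∀ x, x ∈ e → x ∉ f
    · obtain ⟨e₀, he₀, f₀, hf₀, hef₀, hdisj⟩ := hA
      have hm2 : 2 ≤ m := by
        rw [← hm]
        exact Finset.one_lt_card.2 ⟨e₀, SimpleGraph.mem_edgeFinset.2 he₀, f₀, SimpleGraph.mem_edgeFinset.2 hf₀, hef₀⟩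
      have hcardT : Fintype.card (G.edgeFinset.erase f₀) = m - 1 := by
        rw [Fintype.card_coe, Finset.card_erase_of_mem (SimpleGraph.mem_edgeFinset.2 hf₀), hm]
      have eqv2 : (G.edgeFinset.erase f₀ : Finset (Sym2 V)) ≃ Fin (m - 1) :=
        Fintype.equivFinOfCardEq hcardT
      have he₀T : e₀ ∈ G.edgeFinset.erase f₀ :=
        Finset.mem_erase.2 ⟨hef₀, SimpleGraph.mem_edgeFinset.2 he₀⟩
      have hmem' : m - 1 ∈ S := by
        refine ⟨fun e => if h : e ∈ G.edgeFinset.erase f₀ then eqv2 ⟨e, h⟩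
          else eqv2 ⟨e₀, he₀T⟩, ?_⟩
        refine isPPC_of hc _ ?_
        intro e f he hf hef hshare
        by_cases h1 : e ∈ G.edgeFinset.erase f₀ <;> by_cases h2 : f ∈ G.edgeFinset.erase f₀
        · simp only [dif_pos h1, dif_pos h2]
          intro h
          exact hef (Subtype.ext_iff.1 (eqv2.injective h))
        · -- f = f₀
          have hf0 : f = f₀ := by
            by_contra hne
            exact h2 (Finset.mem_erase.2 ⟨hne, SimpleGraph.mem_edgeFinset.2 hf⟩)
          simp only [dif_pos h1, dif_neg h2]
          intro h
          have he0 : e = e₀ := Subtype.ext_iff.1 (eqv2.injective h)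
          obtain ⟨x, hx1, hx2⟩ := hshare
          exact hdisj x (he0 ▸ hx1) (hf0 ▸ hx2)
        · have he0 : e = f₀ := by
            by_contra hne
            exact h1 (Finset.mem_erase.2 ⟨hne, SimpleGraph.mem_edgeFinset.2 he⟩)
          simp only [dif_neg h1, dif_pos h2]
          intro h
          have hf0 : f = e₀ := (Subtype.ext_iff.1 (eqv2.injective h)).symm
          obtain ⟨x, hx1, hx2⟩ := hshare
          exact hdisj x (hf0 ▸ hx2) (he0 ▸ hx1)
        · -- both equal f₀, impossible
          exfalso
          apply hef
          have he0 : e = f₀ := by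
            by_contra hne
            exact h1 (Finset.mem_erase.2 ⟨hne, SimpleGraph.mem_edgeFinset.2 he⟩)
          have hf0 : f = f₀ := by
            by_contra hne
            exact h2 (Finset.mem_erase.2 ⟨hne, SimpleGraph.mem_edgeFinset.2 hf⟩)
          rw [he0, hf0]
      have hle : pc G ≤ m - 1 := Nat.sInf_le hmem'
      rw [hpceq] at hle
      omega
    · -- every two edges intersect
      push_neg at hA
      -- pick an edge s(a,b)
      obtain ⟨e₁, he₁⟩ : ∃ e, e ∈ G.edgeFinset := by
        have : G.edgeFinset.Nonempty := by rw [← Finset.card_pos, hm]; omega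
        exact this
      rw [SimpleGraph.mem_edgeFinset] at he₁
      induction e₁ with
      | _ a b =>
        rw [SimpleGraph.mem_edgeSet] at he₁
        have hab : G.Adj a b := he₁
        have he₁' : s(a, b) ∈ G.edgeSet := G.mem_edgeSet.2 he₁
        -- helper to build a star and contradict hniso
        have star_case : ∀ z : V, (∀ u v : V, G.Adj u v → u = z ∨ v = z) → False := by
          intro z h2
          have h1 : ∀ v, v ≠ z → G.Adj z v := by
            intro v hv
            obtain ⟨w⟩ := hc.preconnected v z
            cases w with
            | nil => exact absurd rfl hv
            | cons h q =>
              rename_i x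
              have hx : x = z := (h2 _ _ h).resolve_left hv
              rw [hx] at h
              exact h.symm
          have hcard := star_card z h1 h2
          rw [hm] at hcard
          exact hniso (star_iso z h1 h2 hcard)
        by_cases hA2 : ∀ u v : V, G.Adj u v → u = a ∨ v = a
        · exact star_case a hA2
        by_cases hA3 : ∀ u v : V, G.Adj u v → u = b ∨ v = b
        · exact star_case b hA3
        push_neg at hA2 hA3
        obtain ⟨u₂, v₂, h2adj, h2a⟩ := hA2
        obtain ⟨u₃, v₃, h3adj, h3b⟩ := hA3
        have hna : a ∉ s(u₂, v₂) := by
          intro hmem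
          rcases Sym2.mem_iff.1 hmem with rfl | rfl
          · exact h2a.1 rfl
          · exact h2a.2 rfl
        have hnb : b ∉ s(u₃, v₃) := by
          intro hmem
          rcases Sym2.mem_iff.1 hmem with rfl | rfl
          · exact h3b.1 rfl
          · exact h3b.2 rfl
        -- s(u₂,v₂) shares a vertex with s(a,b); that vertex is b
        have hmemb : b ∈ s(u₂, v₂) := by
          have hne : s(a, b) ≠ s(u₂, v₂) := fun h => hna (h ▸ (by simp))
          obtain ⟨x, hx1, hx2⟩ := hA _ he₁' _ (G.mem_edgeSet.2 h2adj) hne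
          rcases Sym2.mem_iff.1 hx1 with rfl | rfl
          · exact absurd hx2 hna
          · exact hx2
        obtain ⟨c, hc2⟩ : ∃ c, s(u₂, v₂) = s(b, c) := by
          rcases Sym2.mem_iff.1 hmemb with rfl | rfl
          · exact ⟨v₂, rfl⟩
          · exact ⟨u₂, Sym2.eq_swap⟩
        have hbc : G.Adj b c := by rw [← SimpleGraph.mem_edgeSet, ← hc2]; exact h2adj
        have hca : c ≠ a := by
          rintro rfl
          exact hna (hc2 ▸ (by simp))
        -- s(u₃,v₃) contains a and c
        have hmema3 : a ∈ s(u₃, v₃) := by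
          have hne : s(a, b) ≠ s(u₃, v₃) := fun h => hnb (h ▸ (by simp))
          obtain ⟨x, hx1, hx2⟩ := hA _ he₁' _ (G.mem_edgeSet.2 h3adj) hne
          rcases Sym2.mem_iff.1 hx1 with rfl | rfl
          · exact hx2
          · exact absurd hx2 hnb
        have hmemc3 : c ∈ s(u₃, v₃) := by
          have hne : s(b, c) ≠ s(u₃, v₃) := fun h => hnb (h ▸ (by simp))
          have hbc' : s(b, c) ∈ G.edgeSet := G.mem_edgeSet.2 hbc
          obtain ⟨x, hx1, hx2⟩ := hA _ hbc' _ (G.mem_edgeSet.2 h3adj) hne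
          rcases Sym2.mem_iff.1 hx1 with rfl | rfl
          · exact absurd hx2 hnb
          · exact hx2
        have hac : G.Adj a c := by
          rcases Sym2.mem_iff.1 hmema3 with rfl | rfl
          · rcases Sym2.mem_iff.1 hmemc3 with rfl | rfl
            · exact absurd rfl hca
            · exact h3adj
          · rcases Sym2.mem_iff.1 hmemc3 with rfl | rfl
            · exact h3adj.symm
            · exact absurd rfl hca
        -- every vertex incident to an edge is one of a, b, c
        have hedge : ∀ x y : V, G.Adj x y → x = a ∨ x = b ∨ x = c := by
          intro x y hxy
          by_contra hx
          push_neg at hx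
          obtain ⟨hxa, hxb, hxc⟩ := hx
          have hyab : y ∈ s(a, b) := by
            have hne : s(a, b) ≠ s(x, y) := by
              intro h
              have : x ∈ s(a, b) := h ▸ (by simp)
              rcases Sym2.mem_iff.1 this with rfl | rfl
              · exact hxa rfl
              · exact hxb rfl
            obtain ⟨z, hz1, hz2⟩ := hA _ he₁' _ (G.mem_edgeSet.2 hxy) hne
            rcases Sym2.mem_iff.1 hz2 with rfl | rfl
            · exfalso
              rcases Sym2.mem_iff.1 hz1 with rfl | rfl
              · exact hxa rfl
              · exact hxb rfl
            · exact hz1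
          have hybc : y ∈ s(b, c) := by
            have hne : s(b, c) ≠ s(x, y) := by
              intro h
              have : x ∈ s(b, c) := h ▸ (by simp)
              rcases Sym2.mem_iff.1 this with rfl | rfl
              · exact hxb rfl
              · exact hxc rfl
            obtain ⟨z, hz1, hz2⟩ := hA _ (G.mem_edgeSet.2 hbc) _
              (G.mem_edgeSet.2 hxy) hne
            rcases Sym2.mem_iff.1 hz2 with rfl | rfl
            · exfalso
              rcases Sym2.mem_iff.1 hz1 with rfl | rfl
              · exact hxb rfl
              · exact hxc rfl
            · exact hz1
          have hyac : y ∈ s(a, c) := by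
            have hne : s(a, c) ≠ s(x, y) := by
              intro h
              have : x ∈ s(a, c) := h ▸ (by simp)
              rcases Sym2.mem_iff.1 this with rfl | rfl
              · exact hxa rfl
              · exact hxc rfl
            obtain ⟨z, hz1, hz2⟩ := hA _ (G.mem_edgeSet.2 hac) _
              (G.mem_edgeSet.2 hxy) hne
            rcases Sym2.mem_iff.1 hz2 with rfl | rfl
            · exfalso
              rcases Sym2.mem_iff.1 hz1 with rfl | rfl
              · exact hxa rfl
              · exact hxc rfl
            · exact hz1
          rcases Sym2.mem_iff.1 hyab with rfl | rfl
          · rcases Sym2.mem_iff.1 hybc with h | h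
            · exact hab.ne h
            · exact hca h.symm
          · rcases Sym2.mem_iff.1 hyac with h | h
            · exact hab.ne h.symm
            · exact hbc.ne h
        -- every vertex is one of a, b, c
        have hV : ∀ v : V, v = a ∨ v = b ∨ v = c := by
          intro v
          by_cases hva : v = a
          · exact Or.inl hva
          obtain ⟨w⟩ := hc.preconnected v a
          cases w with
          | nil => exact Or.inl rfl
          | cons h q => exact hedge _ _ h
        -- so G is complete, hence 1 color suffices
        have hcomp : ∀ u v : V, u ≠ v → G.Adj u v := by
          intro u v huv
          rcases hV u with rfl | rfl | rfl <;> rcases hV v with rfl | rfl | rfl <;>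
            first
              | exact absurd rfl huv
              | exact hab | exact hab.symm
              | exact hbc | exact hbc.symm
              | exact hac | exact hac.symm
        have h1S : 1 ∈ S := by
          refine ⟨fun _ => ⟨0, Nat.one_pos⟩, ?_⟩
          intro u v huv
          exact ⟨.cons (hcomp u v huv) .nil, by simp [SimpleGraph.Walk.isPath_def, huv],
            by simp [List.Chain']⟩
        have hm2 : 2 ≤ m := by
          rw [← hm]
          refine Finset.one_lt_card.2 ⟨s(a, b), SimpleGraph.mem_edgeFinset.2 he₁', s(b, c),
            SimpleGraph.mem_edgeFinset.2 (G.mem_edgeSet.2 hbc), ?_⟩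
          intro h
          have : a ∈ s(b, c) := h ▸ (by simp)
          rcases Sym2.mem_iff.1 this with rfl | rfl
          · exact hab.ne rfl
          · exact hca rfl
        have hle : pc G ≤ 1 := Nat.sInf_le h1S
        rw [hpceq] at hle
        omega
  · -- star → pc G = m
    rintro ⟨iso⟩
    set a : V := iso.symm (Sum.inl 0) with ha
    have hia : iso a = Sum.inl 0 := iso.apply_symm_apply _
    have h2 : ∀ u v : V, G.Adj u v → u = a ∨ v = a := by
      intro u v h
      have hadj : (completeBipartiteGraph (Fin 1) (Fin m)).Adj (iso u) (iso v) :=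
        iso.map_rel_iff.2 h
      rcases hadj with ⟨hl, _⟩ | ⟨_, hl⟩
      · left
        obtain ⟨i, hi⟩ := Sum.isLeft_iff.1 hl
        have : iso u = Sum.inl 0 := by rw [hi, Subsingleton.elim i 0]
        rw [← hia] at this
        exact iso.injective this
      · right
        obtain ⟨i, hi⟩ := Sum.isLeft_iff.1 hl
        have : iso v = Sum.inl 0 := by rw [hi, Subsingleton.elim i 0]
        rw [← hia] at this
        exact iso.injective this
    have h1 : ∀ v, v ≠ a → G.Adj a v := by
      intro v hv
      have hne : iso v ≠ Sum.inl 0 := fun h => hv (iso.injective (h.trans hia.symm))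
      obtain ⟨j, hj⟩ : ∃ j, iso v = Sum.inr j := by
        rcases h : iso v with i | j
        · exact absurd (by rw [h, Subsingleton.elim i 0]) hne
        · exact ⟨j, rfl⟩
      have : (completeBipartiteGraph (Fin 1) (Fin m)).Adj (iso a) (iso v) := by
        rw [hia, hj]
        simp
      exact iso.map_rel_iff.1 this
    have hcard := star_card a h1 h2
    rw [hm] at hcard
    rw [hpc]
    refine le_antisymm (Nat.sInf_le hmemS) ?_
    obtain ⟨c, hcc⟩ := Nat.sInf_mem hSne
    calc m = Fintype.card {v : V // v ≠ a} := hcard.symm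
    _ ≤ sInf S := star_lb a h2 c hcc
end

section
/- Let G and H be connected graphs with pc(G) ≥ 2 and pc(H) ≥ 2. If pc(G) > pc(H) then pc(G ∘ H) ≤ pc(H), where G ∘ H is the lexicographic product. -/
open SimpleGraph

/-- The lexicographic product `G ∘ H`. -/
def lexProd {V W : Type*} (G : SimpleGraph V) (H : SimpleGraph W) : SimpleGraph (V × W) where
  Adj x y := G.Adj x.1 y.1 ∨ (x.1 = y.1 ∧ H.Adj x.2 y.2)
  symm := by
    constructor
    rintro ⟨a, b⟩ ⟨a', b'⟩ (h | ⟨h1, h2⟩)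
    · exact Or.inl h.symm
    · exact Or.inr ⟨h1.symm, h2.symm⟩
  loopless := by
    constructor
    rintro ⟨a, b⟩ (h | ⟨-, h⟩)
    · exact G.loopless.irrefl a h
    · exact H.loopless.irrefl b h

lemma fin_two_cases (d : Fin 2) : d = 0 ∨ d = 1 := by
  fin_cases d
  · exact Or.inl rfl
  · exact Or.inr rfl

-- The 2-coloring of the lexicographic product: color `0` if the second
-- coordinates agree, else `1`.
open Classical in
noncomputable def col {V W : Type*} : Sym2 (V × W) → Fin 2 :=
  Sym2.lift ⟨fun x y => if x.2 = y.2 then 0 else 1, fun x y => by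
    by_cases h : x.2 = y.2 <;> simp [h, eq_comm]⟩

open Classical in
@[simp] lemma col_mk {V W : Type*} (x y : V × W) :
    col s(x, y) = if x.2 = y.2 then 0 else 1 := rfl

-- The side condition governing which first-edge colors are achievable when
-- lifting a path of length `n` from `(·, a)` to `(·, b)`.
open Classical in
def Cond {W : Type*} (n : ℕ) (d : Fin 2) (a b : W) : Prop :=
  (n = 1 ∧ d = (if a = b then 0 else 1)) ∨ (n = 2 ∧ a ≠ b) ∨
    (n = 3 ∧ (d = 1 ∨ a ≠ b)) ∨ 4 ≤ n

lemma main_lift {V W : Type*} (G : SimpleGraph V) (H : SimpleGraph W)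
    (hW : ∀ a b : W, ∃ h : W, h ≠ a ∧ h ≠ b) :
    ∀ {x v : V} (p : G.Walk x v), p.IsPath → ∀ (a b : W) (d : Fin 2),
      Cond p.length d a b →
    ∃ q : (lexProd G H).Walk (x, a) (v, b), q.IsPath ∧
      List.Chain' (fun e f => col e ≠ col f) q.edges ∧
      (∀ z ∈ q.support, z.1 ∈ p.support) ∧
      q.edges.head?.map col = some d := by
  classical
  intro x v p
  induction p with
  | nil =>
    intro _ a b d hc
    rcases hc with ⟨h', _⟩ | ⟨h', _⟩ | ⟨h', _⟩ | h' <;> simp at h'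
  | @cons x y v h r ih =>
    intro hp a b d hc
    have hp' : r.IsPath := ((Walk.cons_isPath_iff h r).mp hp).1
    have hxr : x ∉ r.support := ((Walk.cons_isPath_iff h r).mp hp).2
    have hlen : (Walk.cons h r).length = r.length + 1 := Walk.length_cons h r
    rcases Nat.eq_zero_or_pos r.length with h0 | hpos
    · -- base case: the walk has length 1
      have hyv : y = v := Walk.eq_of_length_eq_zero h0
      subst hyv
      have hd : d = (if a = b then 0 else 1) := by
        rcases hc with ⟨_, hd⟩ | ⟨h2, _⟩ | ⟨h3, _⟩ | h4 <;>
          first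
            | exact hd
            | (exfalso; rw [hlen, h0] at * <;> omega)
      refine ⟨Walk.cons (show (lexProd G H).Adj _ _ from Or.inl h) Walk.nil, ?_, ?_, ?_, ?_⟩
      · simp only [Walk.isPath_def, Walk.support_cons, Walk.support_nil]
        simp [List.nodup_cons, Prod.ext_iff, h.ne]
      · simp [List.Chain', List.isChain_singleton]
      · intro z hz
        simp only [Walk.support_cons, Walk.support_nil, List.mem_cons,
          List.mem_singleton, List.not_mem_nil] at hz
        rcases hz with rfl | rfl | h'
        · exact Walk.start_mem_support _
        · exact Walk.end_mem_support _
        · exact h'.elim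
      · simp [hd]
    · -- inductive step: the walk has length ≥ 2
      have key : ∃ (w : W) (d' : Fin 2),
          (if a = w then (0 : Fin 2) else 1) = d ∧ d' ≠ d ∧ Cond r.length d' w b := by
        rw [hlen] at hc
        have hd2 := fin_two_cases d
        rcases hc with ⟨h1, _⟩ | ⟨h2, hab⟩ | ⟨h3, hor⟩ | h4
        · omega
        · -- r.length = 1
          have hr1 : r.length = 1 := by omega
          rcases hd2 with rfl | rfl
          · exact ⟨a, 1, by simp, by decide, Or.inl ⟨hr1, by simp [hab]⟩⟩
          · exact ⟨b, 0, by simp [hab], by decide, Or.inl ⟨hr1, by simp⟩⟩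
        · -- r.length = 2
          have hr2 : r.length = 2 := by omega
          rcases hd2 with rfl | rfl
          · have hab : a ≠ b := by
              rcases hor with h' | h'
              · exact absurd h' (by decide)
              · exact h'
            exact ⟨a, 1, by simp, by decide, Or.inr (Or.inl ⟨hr2, hab⟩)⟩
          · obtain ⟨w, hwa, hwb⟩ := hW a b
            exact ⟨w, 0, by simp [Ne.symm hwa], by decide, Or.inr (Or.inl ⟨hr2, hwb⟩)⟩
        · -- r.length ≥ 3
          have hr3 : 3 ≤ r.length := by omega
          rcases Nat.lt_or_ge r.length 4 with hl | hl
          · -- r.length = 3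
            have hr3' : r.length = 3 := by omega
            rcases hd2 with rfl | rfl
            · exact ⟨a, 1, by simp, by decide, Or.inr (Or.inr (Or.inl ⟨hr3', Or.inl rfl⟩))⟩
            · obtain ⟨w, hwa, hwb⟩ := hW a b
              exact ⟨w, 0, by simp [Ne.symm hwa], by decide,
                Or.inr (Or.inr (Or.inl ⟨hr3', Or.inr hwb⟩))⟩
          · -- r.length ≥ 4
            rcases hd2 with rfl | rfl
            · exact ⟨a, 1, by simp, by decide, Or.inr (Or.inr (Or.inr hl))⟩
            · obtain ⟨w, hwa, -⟩ := hW a a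
              exact ⟨w, 0, by simp [Ne.symm hwa], by decide, Or.inr (Or.inr (Or.inr hl))⟩
      obtain ⟨w, d', cw, dne, hC'⟩ := key
      obtain ⟨q', hq'path, hq'chain, hq'supp, hq'head⟩ := ih hp' w b d' hC'
      refine ⟨Walk.cons (show (lexProd G H).Adj _ _ from Or.inl h) q', ?_, ?_, ?_, ?_⟩
      · exact hq'path.cons (fun hm => hxr (hq'supp _ hm))
      · rw [Walk.edges_cons]
        refine List.isChain_cons.mpr ⟨?_, hq'chain⟩
        intro f hf
        have hcf : col f = d' := by
          rw [hf] at hq'head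
          simpa using hq'head
        rw [col_mk, cw, hcf]
        exact fun e => dne e.symm
      · intro z hz
        rw [Walk.support_cons] at hz
        rw [Walk.support_cons]
        rcases List.mem_cons.mp hz with rfl | hz'
        · exact List.mem_cons_self
        · exact List.mem_cons_of_mem _ (hq'supp z hz')
      · rw [Walk.edges_cons]
        simp [cw]

theorem stmt9 {V W : Type*} (G : SimpleGraph V) (H : SimpleGraph W)
    (hG : G.Connected) (hH : H.Connected) (hG2 : 2 ≤ pc G) (hH2 : 2 ≤ pc H)
    (hlt : pc H < pc G) :
    pc (lexProd G H) ≤ pc H := by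
  classical
  -- every vertex of `G` has a neighbor
  have hVadj : ∀ u : V, ∃ g : V, G.Adj u g := by
    intro u
    by_contra hno
    push_neg at hno
    have hall : ∀ v : V, v = u := by
      intro v
      by_contra hvu
      obtain ⟨p⟩ := hG.preconnected u v
      cases p with
      | nil => exact hvu rfl
      | cons h' _ => exact hno _ h'
    have h1 : (1 : ℕ) ∈ {k | ∃ c : Sym2 V → Fin k, IsProperPathColoring G c} :=
      ⟨fun _ => 0, fun u' v' huv => absurd ((hall u').trans (hall v').symm) huv⟩
    have h2 : pc G ≤ 1 := Nat.sInf_le h1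
    omega
  -- `W` has at least 3 elements
  have hW3 : ∀ a b : W, ∃ h : W, h ≠ a ∧ h ≠ b := by
    intro a b
    by_contra hno
    push_neg at hno
    have hmem : ∀ w : W, w = a ∨ w = b := by
      intro w
      by_cases h : w = a
      · exact Or.inl h
      · exact Or.inr (hno w h)
    have h1 : (1 : ℕ) ∈ {k | ∃ c : Sym2 W → Fin k, IsProperPathColoring H c} := by
      refine ⟨fun _ => 0, fun u v huv => ?_⟩
      obtain ⟨p⟩ := hH.preconnected u v
      cases p with
      | nil => exact absurd rfl huv
      | @cons _ z _ h' q =>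
        have hzu : z ≠ u := fun e => H.loopless.irrefl u (e ▸ h')
        have hzv : z = v := by
          rcases hmem z with rfl | rfl <;> rcases hmem u with h1 | h1 <;>
            rcases hmem v with h2 | h2 <;> simp_all
        subst hzv
        refine ⟨Walk.cons h' Walk.nil, ?_, by simp [List.Chain', List.isChain_singleton]⟩
        simp [Walk.isPath_def, List.nodup_cons, huv]
    have h2 : pc H ≤ 1 := Nat.sInf_le h1
    omega
  -- the 2-coloring works
  have h2 : (2 : ℕ) ∈ {k | ∃ c : Sym2 (V × W) → Fin k,
      IsProperPathColoring (lexProd G H) c} := by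
    refine ⟨col, ?_⟩
    rintro ⟨u, a⟩ ⟨v, b⟩ huv
    by_cases huv1 : u = v
    · -- same first coordinate
      subst huv1
      have hab : a ≠ b := fun e => huv (by rw [e])
      obtain ⟨g, hg⟩ := hVadj u
      refine ⟨Walk.cons (v := (g, a)) (show (lexProd G H).Adj _ _ from Or.inl hg)
        (Walk.cons (show (lexProd G H).Adj _ _ from Or.inl hg.symm) Walk.nil), ?_, ?_⟩
      · simp [Walk.isPath_def, List.nodup_cons, Prod.ext_iff, hg.ne, hg.ne', hab]
      · simp [hab, List.Chain', List.isChain_cons_cons, List.isChain_singleton]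
    · -- distinct first coordinates
      obtain ⟨p0⟩ := hG.preconnected u v
      obtain ⟨q, hqp⟩ : ∃ q : G.Walk u v, q.IsPath := ⟨p0.bypass, p0.bypass_isPath⟩
      have hq1 : 1 ≤ q.length := by
        rcases Nat.eq_zero_or_pos q.length with h0 | h'
        · exact absurd (Walk.eq_of_length_eq_zero h0) huv1
        · exact h'
      by_cases hsp : q.length = 2 ∧ a = b
      · -- the exceptional case: distance 2 and equal second coordinates
        obtain ⟨hlen2, rfl⟩ := hsp
        obtain ⟨m, hm, -⟩ := hW3 a a
        cases q with
        | nil => simp at hlen2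
        | @cons _ g _ h1 r =>
          cases r with
          | nil => simp at hlen2
          | @cons _ g2 _ h2 r2 =>
            have hr2 : r2.length = 0 := by
              simp only [Walk.length_cons] at hlen2
              omega
            have hg2v : g2 = v := Walk.eq_of_length_eq_zero hr2
            subst hg2v
            refine ⟨Walk.cons (v := (g, a)) (show (lexProd G H).Adj _ _ from Or.inl h1)
              (Walk.cons (v := (u, m)) (show (lexProd G H).Adj _ _ from Or.inl h1.symm)
                (Walk.cons (v := (g, m)) (show (lexProd G H).Adj _ _ from Or.inl h1)
                  (Walk.cons (show (lexProd G H).Adj _ _ from Or.inl h2) Walk.nil))), ?_, ?_⟩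
            · simp [Walk.isPath_def, List.nodup_cons, Prod.ext_iff, h1.ne, h1.ne',
                h2.ne, h2.ne', huv1, hm, Ne.symm hm]
            · simp [hm, Ne.symm hm, List.Chain', List.isChain_cons_cons, List.isChain_singleton]
      · -- all other cases: lift via `main_lift`
        have hcond : ∃ d : Fin 2, Cond q.length d a b := by
          rcases Nat.lt_or_ge q.length 2 with hl | hl
          · refine ⟨if a = b then 0 else 1, Or.inl ⟨by omega, rfl⟩⟩
          · rcases Nat.lt_or_ge q.length 3 with hl2 | hl2
            · have hab : a ≠ b := fun e => hsp ⟨by omega, e⟩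
              exact ⟨0, Or.inr (Or.inl ⟨by omega, hab⟩)⟩
            · rcases Nat.lt_or_ge q.length 4 with hl3 | hl3
              · exact ⟨1, Or.inr (Or.inr (Or.inl ⟨by omega, Or.inl rfl⟩))⟩
              · exact ⟨1, Or.inr (Or.inr (Or.inr hl3))⟩
        obtain ⟨d, hd⟩ := hcond
        obtain ⟨q', hq'1, hq'2, -, -⟩ := main_lift G H hW3 q hqp a b d hd
        exact ⟨q', hq'1, hq'2⟩
  have hle : pc (lexProd G H) ≤ 2 := Nat.sInf_le h2
  omega
end

section
/- For the Cartesian product of a path P_2 and a complete graph K_n (n ≥ 2), pc(P_2 □ K_n) = 2. -/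
open SimpleGraph

theorem stmt14 (n : ℕ) (hn : 2 ≤ n) :
    pc (pathGraph 2 □ (⊤ : SimpleGraph (Fin n))) = 2 := by
  set G := pathGraph 2 □ (⊤ : SimpleGraph (Fin n)) with hG
  set S := {k | ∃ c : Sym2 (Fin 2 × Fin n) → Fin k, IsProperPathColoring G c} with hS
  have h2 : (2 : ℕ) ∈ S := by
    refine ⟨Sym2.lift ⟨fun u v => if u.1 = v.1 then 0 else 1, ?_⟩, ?_⟩
    · intro a b
      simp only [eq_comm]
    · rintro ⟨u1, u2⟩ ⟨v1, v2⟩ huv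
      by_cases h1 : u1 = v1
      · subst h1
        have h2' : u2 ≠ v2 := fun h => huv (by rw [h])
        have hadj : G.Adj (u1, u2) (u1, v2) := by
          rw [hG, boxProd_adj]; right; exact ⟨h2', rfl⟩
        refine ⟨Walk.cons hadj Walk.nil, ?_, ?_⟩
        · simp [Walk.isPath_def, huv]
        · simp [List.Chain']
      · by_cases h2' : u2 = v2
        · subst h2'
          have hadj : G.Adj (u1, u2) (v1, u2) := by
            rw [hG, boxProd_adj]; left
            refine ⟨?_, rfl⟩
            show (pathGraph 2).Adj u1 v1
            rw [pathGraph_adj]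
            have := Fin.val_ne_of_ne h1
            omega
          refine ⟨Walk.cons hadj Walk.nil, ?_, ?_⟩
          · simp [Walk.isPath_def]
            exact h1
          · simp [List.Chain']
        · have hadj1 : G.Adj (u1, u2) (u1, v2) := by
            rw [hG, boxProd_adj]; right; exact ⟨h2', rfl⟩
          have hadj2 : G.Adj (u1, v2) (v1, v2) := by
            rw [hG, boxProd_adj]; left
            refine ⟨?_, rfl⟩
            show (pathGraph 2).Adj u1 v1
            rw [pathGraph_adj]
            have := Fin.val_ne_of_ne h1
            omega
          refine ⟨Walk.cons hadj1 (Walk.cons hadj2 Walk.nil), ?_, ?_⟩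
          · simp [Walk.isPath_def]
            exact ⟨⟨h2', fun _ => h2'⟩, h1⟩
          · simp [Walk.edges_cons, List.Chain', List.isChain_cons_cons, h1, h2']
  have hlb : ∀ k ∈ S, 2 ≤ k := by
    rintro k ⟨c, hc⟩
    by_contra hlt
    interval_cases k
    · exact (c (Sym2.mk ((0 : Fin 2), (⟨0, by omega⟩ : Fin n)) ((0 : Fin 2), (⟨0, by omega⟩ : Fin n)))).elim0
    · obtain ⟨a0, ha0⟩ : ∃ a : Fin n, a.val = 0 := ⟨⟨0, by omega⟩, rfl⟩
      obtain ⟨a1, ha1⟩ : ∃ a : Fin n, a.val = 1 := ⟨⟨1, by omega⟩, rfl⟩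
      have hne : ((0 : Fin 2), a0) ≠ ((1 : Fin 2), a1) := by
        intro h
        have := congrArg Prod.fst h
        simp at this
      obtain ⟨p, hp, hchain⟩ := hc _ _ hne
      have hnadj : ¬ G.Adj ((0 : Fin 2), a0) ((1 : Fin 2), a1) := by
        rw [hG, boxProd_adj]
        rintro (⟨_, h⟩ | ⟨_, h⟩)
        · have := congrArg Fin.val h; simp at this; omega
        · simp at h
      cases p with
      | cons h q =>
        cases q with
        | nil => exact hnadj h
        | cons h' q' =>
          rw [Walk.edges_cons, Walk.edges_cons, List.Chain', List.isChain_cons_cons] at hchain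
          exact hchain.1 (Subsingleton.elim _ _)
  refine le_antisymm (Nat.sInf_le h2) ?_
  exact hlb _ (Nat.sInf_mem ⟨2, h2⟩)
end

section
/- For an n-dimensional mesh, i.e., the Cartesian product P_{L_1} □ P_{L_2} □ ⋯ □ P_{L_n} of n ≥ 2 paths each with L_i ≥ 2 vertices, the proper connection number equals 2. -/
open SimpleGraph

/-- The Cartesian (box) product of a family of graphs: two tuples are adjacent iff they
differ in exactly one coordinate, where they are adjacent. -/
def boxProdFamily {ι : Type*} {V : ι → Type*} (G : ∀ i, SimpleGraph (V i)) :
    SimpleGraph (∀ i, V i) where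
  Adj x y := ∃ i, (G i).Adj (x i) (y i) ∧ ∀ j, j ≠ i → x j = y j
  symm := by
    constructor
    rintro x y ⟨i, hadj, heq⟩
    exact ⟨i, hadj.symm, fun j hj => (heq j hj).symm⟩
  loopless := by
    constructor
    rintro x ⟨i, hadj, -⟩
    exact (G i).irrefl hadj


open SimpleGraph.Walk

lemma chain'_parity {α : Type*} [DecidableEq α] {A m B : List α}
    (hnd : (A ++ m ++ B).Nodup) :
    List.Chain' (fun e f => (A ++ m ++ B).idxOf e % 2 ≠ (A ++ m ++ B).idxOf f % 2) m := by
  rw [List.Chain', List.isChain_iff_getElem]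
  intro i hi
  have key : ∀ j (hj : j < m.length), (A ++ m ++ B).idxOf m[j] = A.length + j := by
    intro j hj
    have h1 : A.length + j < (A ++ m ++ B).length := by
      simp only [List.length_append]; omega
    have h2 : (A ++ m ++ B)[A.length + j]'h1 = m[j] := by
      rw [List.getElem_append_left (by simp; omega), List.getElem_append_right (by omega)]
      congr 1; omega
    rw [← h2, hnd.idxOf_getElem]
  have k1 := key i (by omega)
  have k2 := key (i+1) (by omega)
  rw [k1, k2]
  omega

lemma ham_coloring {V : Type*} [DecidableEq V] {G : SimpleGraph V} {a b : V}
    (p : G.Walk a b) (hp : p.IsPath) (hall : ∀ v, v ∈ p.support) :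
    ∃ c : Sym2 V → Fin 2, IsProperPathColoring G c := by
  refine ⟨fun e => ⟨p.edges.idxOf e % 2, Nat.mod_lt _ two_pos⟩, ?_⟩
  intro u v huv
  obtain ⟨q, r, rfl⟩ := mem_support_iff_exists_append.mp (hall u)
  have hv := hall v
  rw [mem_support_append_iff] at hv
  have hend : (q.append r).edges.Nodup := hp.isTrail.edges_nodup
  rcases hv with hv | hv
  · -- v occurs in q : Walk a u ; use reversed subwalk
    obtain ⟨q1, q2, rfl⟩ := mem_support_iff_exists_append.mp hv
    refine ⟨q2.reverse, ?_, ?_⟩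
    · exact ((hp.of_append_left).of_append_right).reverse
    · rw [Walk.edges_reverse, List.Chain', List.isChain_reverse]
      have hnd : (q1.edges ++ q2.edges ++ r.edges).Nodup := by
        simpa [Walk.edges_append, List.append_assoc] using hend
      refine (chain'_parity hnd).imp ?_
      intro e f h hc
      simp only [flip] at hc
      apply h
      have : ((q1.append q2).append r).edges = q1.edges ++ q2.edges ++ r.edges := by
        simp [Walk.edges_append, List.append_assoc]
      rw [this] at hc
      exact (by simpa [Fin.ext_iff] using hc.symm)
  · obtain ⟨r1, r2, rfl⟩ := mem_support_iff_exists_append.mp hv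
    refine ⟨r1, ?_, ?_⟩
    · exact (hp.of_append_right).of_append_left
    · have hnd : (q.edges ++ r1.edges ++ r2.edges).Nodup := by
        simpa [Walk.edges_append, List.append_assoc] using hend
      refine (chain'_parity hnd).imp ?_
      intro e f h hc
      apply h
      have : (q.append (r1.append r2)).edges = q.edges ++ r1.edges ++ r2.edges := by
        simp [Walk.edges_append, List.append_assoc]
      rw [this] at hc
      simpa [Fin.ext_iff] using hc

lemma boxProdLeft_support' {α β : Type*} {G : SimpleGraph α} (H : SimpleGraph β) (c : β)
    {a b : α} (p : G.Walk a b) :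
    (p.boxProdLeft H c).support = p.support.map (G.boxProdLeft H c) :=
  Walk.support_map _ _

lemma snake {α β : Type*} {G : SimpleGraph α} {H : SimpleGraph β} {c d : β}
    (q : H.Walk c d) :
    q.IsPath → ∀ {a b : α} (p : G.Walk a b), p.IsPath → (∀ x, x ∈ p.support) →
    ∃ e, ∃ w : (G □ H).Walk (a, c) (e, d), w.IsPath ∧
      ∀ z : α × β, z ∈ w.support ↔ z.2 ∈ q.support := by
  induction q with
  | nil =>
    intro _ a b p hp hall
    refine ⟨b, p.boxProdLeft H _, ?_, ?_⟩
    · exact Walk.map_isPath_of_injective (G.boxProdLeft H _).injective hp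
    · intro z
      simp only [boxProdLeft_support', Walk.support_nil, List.mem_singleton,
        List.mem_map, Embedding.coe_toHom, boxProdLeft_apply]
      constructor
      · rintro ⟨x, -, rfl⟩; rfl
      · intro hz
        obtain ⟨z1, z2⟩ := z
        cases hz
        exact ⟨z1, hall z1, rfl⟩
  | @cons c c' d h q ih =>
    intro hq a b p hp hall
    obtain ⟨e, w', hw', hsup'⟩ := ih hq.of_cons p.reverse hp.reverse (by simp [hall])
    have hadj : (G □ H).Adj (b, c) (b, c') := boxProd_adj_right.mpr h
    have hc_not : c ∉ q.support := ((Walk.cons_isPath_iff _ _).mp hq).2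
    refine ⟨e, (p.boxProdLeft H c).append (Walk.cons hadj w'), ?_, ?_⟩
    · apply Walk.IsPath.mk'
      rw [Walk.support_append, Walk.support_cons, List.tail_cons, List.nodup_append']
      refine ⟨?_, hw'.support_nodup, ?_⟩
      · simp only [boxProdLeft_support']
        exact hp.support_nodup.map (G.boxProdLeft H c).injective
      · intro z hz1 hz2
        simp only [boxProdLeft_support', List.mem_map,
          Embedding.coe_toHom, boxProdLeft_apply] at hz1
        obtain ⟨x, -, rfl⟩ := hz1
        exact hc_not ((hsup' _).mp hz2)
    · intro z
      rw [Walk.mem_support_append_iff, Walk.support_cons, List.mem_cons,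
        Walk.support_cons, List.mem_cons]
      simp only [boxProdLeft_support', List.mem_map,
        Embedding.coe_toHom, boxProdLeft_apply]
      constructor
      · rintro (⟨x, -, rfl⟩ | rfl | hz)
        · exact Or.inl rfl
        · exact Or.inl rfl
        · exact Or.inr ((hsup' _).mp hz)
      · rintro (hz | hz)
        · exact Or.inl ⟨z.1, hall z.1, by obtain ⟨z1, z2⟩ := z; cases hz; rfl⟩
        · exact Or.inr (Or.inr ((hsup' z).mpr hz))

/-- A graph has a Hamiltonian path (phrased concretely). -/
def HasHamPath {V : Type*} (G : SimpleGraph V) : Prop :=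
  ∃ (a b : V) (p : G.Walk a b), p.IsPath ∧ ∀ v, v ∈ p.support

lemma pathGraph_walk (m : ℕ) :
    ∀ k (hk : k < m + 1), ∃ p : (pathGraph (m + 1)).Walk ⟨0, Nat.succ_pos m⟩ ⟨k, hk⟩,
      p.IsPath ∧ ∀ j : Fin (m + 1), j ∈ p.support ↔ j.val ≤ k := by
  intro k
  induction k with
  | zero =>
    intro hk
    refine ⟨Walk.nil, Walk.IsPath.nil, ?_⟩
    intro j
    simp only [Walk.support_nil, List.mem_singleton, Fin.ext_iff]
    omega
  | succ k ih =>
    intro hk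
    obtain ⟨p, hp, hsup⟩ := ih (by omega)
    have hadj : (pathGraph (m + 1)).Adj ⟨k, by omega⟩ ⟨k + 1, hk⟩ :=
      pathGraph_adj.mpr (Or.inl rfl)
    refine ⟨p.concat hadj, ?_, ?_⟩
    · apply Walk.IsPath.mk'
      rw [Walk.support_concat, List.nodup_append']
      refine ⟨hp.support_nodup, List.nodup_singleton _, ?_⟩
      intro z hz1 hz2
      rw [List.mem_singleton] at hz2
      subst hz2
      have := (hsup _).mp hz1
      simp at this
    · intro j
      rw [Walk.support_concat, List.mem_append, hsup,
        List.mem_singleton]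
      simp only [Fin.ext_iff]
      omega

lemma pathGraph_hasHamPath (m : ℕ) (hm : 1 ≤ m) : HasHamPath (pathGraph m) := by
  obtain ⟨m, rfl⟩ : ∃ k, m = k + 1 := ⟨m - 1, by omega⟩
  obtain ⟨p, hp, hsup⟩ := pathGraph_walk m m (by omega)
  exact ⟨_, _, p, hp, fun v => (hsup v).mpr (by omega)⟩

/-- The hom gluing a head coordinate onto a tail tuple. -/
def consHom (n : ℕ) (V : Fin (n + 1) → Type*) (G : ∀ i, SimpleGraph (V i)) :
    (G 0 □ boxProdFamily fun i : Fin n => G i.succ) →g boxProdFamily G where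
  toFun x := Fin.cons x.1 x.2
  map_rel' := by
    rintro ⟨x0, x⟩ ⟨y0, y⟩ hxy
    rw [boxProd_adj] at hxy
    rcases hxy with ⟨hadj, heq⟩ | ⟨hadj, heq⟩
    · refine ⟨0, by simpa using hadj, fun j hj => ?_⟩
      refine Fin.cases (fun h => absurd rfl h) (fun k _ => ?_) j hj
      simp only [Fin.cons_succ]
      exact congrFun heq k
    · dsimp only at heq hadj
      obtain ⟨i, hadj', heqk⟩ := hadj
      refine ⟨i.succ, by simpa using hadj', fun j hj => ?_⟩
      refine Fin.cases (fun _ => ?_) (fun k hk => ?_) j hj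
      · simpa using heq
      · have hki : k ≠ i := fun h => hk (by rw [h])
        simpa using heqk k hki

lemma consHom_bijective (n : ℕ) (V : Fin (n + 1) → Type*) (G : ∀ i, SimpleGraph (V i)) :
    Function.Bijective (consHom n V G) := by
  constructor
  · rintro ⟨x0, x⟩ ⟨y0, y⟩ hxy
    have h0 := congrFun hxy 0
    have hs := fun k : Fin n => congrFun hxy k.succ
    simp only [consHom, Fin.cons_zero, Fin.cons_succ] at h0 hs
    exact Prod.ext h0 (funext hs)
  · intro z
    exact ⟨⟨z 0, fun k => z k.succ⟩, Fin.cons_self_tail z⟩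

lemma hasHamPath_boxProdFamily :
    ∀ (n : ℕ) (V : Fin n → Type) (G : ∀ i, SimpleGraph (V i)),
      (∀ i, HasHamPath (G i)) → HasHamPath (boxProdFamily G) := by
  intro n
  induction n with
  | zero =>
    intro V G _
    refine ⟨fun i => i.elim0, fun i => i.elim0, Walk.nil, Walk.IsPath.nil, ?_⟩
    intro v
    have hv : v = fun i => i.elim0 := funext fun i => i.elim0
    subst hv
    simp
  | succ n ih =>
    intro V G hG
    classical
    obtain ⟨c, d, q, hq, hqall⟩ := ih (fun i => V i.succ) (fun i => G i.succ)
      (fun i => hG i.succ)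
    obtain ⟨a, b, p, hp, hpall⟩ := hG 0
    obtain ⟨e, w, hw, hwsup⟩ := snake q hq p hp hpall
    have hwall : ∀ z, z ∈ w.support := fun z => (hwsup z).mpr (hqall _)
    have hham : w.IsHamiltonian := hw.isHamiltonian_of_mem hwall
    have hham2 := hham.map (consHom n V G) (consHom_bijective n V G)
    exact ⟨_, _, w.map (consHom n V G), hham2.isPath, fun v => hham2.mem_support v⟩

theorem stmt17 (n : ℕ) (hn : 2 ≤ n) (L : Fin n → ℕ) (hL : ∀ i, 2 ≤ L i) :
    pc (boxProdFamily (fun i => pathGraph (L i))) = 2 := by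
  classical
  obtain ⟨a, b, p, hp, hall⟩ := hasHamPath_boxProdFamily n (fun i => Fin (L i))
    (fun i => pathGraph (L i)) (fun i => pathGraph_hasHamPath (L i) (by have := hL i; omega))
  obtain ⟨c2, hc2⟩ := ham_coloring p hp hall
  have h2mem : 2 ∈ {k | ∃ c : Sym2 (∀ i : Fin n, Fin (L i)) → Fin k,
      IsProperPathColoring (boxProdFamily (fun i => pathGraph (L i))) c} := ⟨c2, hc2⟩
  unfold pc
  apply le_antisymm
  · exact Nat.sInf_le h2mem
  · apply le_csInf ⟨2, h2mem⟩
    intro k hk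
    by_contra hlt
    push_neg at hlt
    obtain ⟨c, hc⟩ := hk
    interval_cases k
    · exact (c s(fun i => ⟨0, by have := hL i; omega⟩, fun i => ⟨0, by have := hL i; omega⟩)).elim0
    · set i0 : Fin n := ⟨0, by omega⟩ with hi0
      set i1 : Fin n := ⟨1, by omega⟩ with hi1
      set u : ∀ i : Fin n, Fin (L i) := fun i => ⟨0, by have := hL i; omega⟩ with hu
      set v : ∀ i : Fin n, Fin (L i) := fun i =>
        if i = i0 ∨ i = i1 then (⟨1, by have := hL i; omega⟩ : Fin (L i))
        else ⟨0, by have := hL i; omega⟩ with hv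
      have hval : ∀ i, (u i).val = 0 := fun i => rfl
      have hv0 : (v i0).val = 1 := by simp [hv]
      have hv1 : (v i1).val = 1 := by simp [hv]
      have hne : u ≠ v := by
        intro h
        have := congrFun h i0
        have h2 := congrArg Fin.val this
        rw [hval, hv0] at h2
        exact absurd h2 (by omega)
      have hnadj : ¬ (boxProdFamily (fun i => pathGraph (L i))).Adj u v := by
        rintro ⟨i, -, heqj⟩
        by_cases hii : i = i0
        · have := congrArg Fin.val (heqj i1 (by rw [hii]; simp [hi0, hi1, Fin.ext_iff]))
          rw [hval, hv1] at this
          exact absurd this (by omega)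
        · have := congrArg Fin.val (heqj i0 (Ne.symm hii))
          rw [hval, hv0] at this
          exact absurd this (by omega)
      clear_value u v
      obtain ⟨q, hqp, hchain⟩ := hc u v hne
      cases q with
      | nil => exact hne rfl
      | cons h q' =>
        cases q' with
        | nil => exact hnadj h
        | cons h' q'' =>
          rw [Walk.edges_cons, Walk.edges_cons, List.Chain', List.isChain_cons_cons] at hchain
          exact hchain.1 (Subsingleton.elim _ _)
end
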